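/- Let 0 → T₁ → M₁ → N₁ → 0 and 0 → T₂ → M₂ → N₂ → 0 be exact sequences of O-modules with compatible vertical maps h' : T₁ → T₂, φ : M₁ → M₂, h'' : N₁ → N₂, where T₁, T₂ are annihilated by a power of π, N₁ and N₂ are finitely generated O-modules, and ker φ and coker φ are finitely generated over O. Then ker h'' and coker h'' are finitely generated over O and rank_O(ker φ) − rank_O(coker φ) = rank_O(ker h'') − rank_O(coker h'') = rank_O(N₁) − rank_O(N₂). -/

import Mathlib

/-!
The torsion modules `T₁`, `T₂` have rank zero, so `rank M₁ = rank N₁` and `rank M₂ = rank N₂`;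
in particular all these ranks are finite. For a linear map between modules of finite rank over a
domain, rank–nullity gives `rank ker - rank coker = rank source - rank target`, so `φ` and `h''`
both have index `rank N₁ - rank N₂`.
-/

open Cardinal Module

universe u

section RankNullity

variable {R : Type*} [Ring R] [HasRankNullity.{u} R] {M N : Type u}
  [AddCommGroup M] [Module R M] [AddCommGroup N] [Module R N]

theorem Submodule.finrank_quotient_add_finrank_of_rank_lt_aleph0 (P : Submodule R M)
    (hM : Module.rank R M < ℵ₀) :
    finrank R (M ⧸ P) + finrank R P = finrank R M := by
  have hsum := P.rank_quotient_add_rank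
  have hQ : Module.rank R (M ⧸ P) < ℵ₀ := le_self_add.trans_lt (hsum ▸ hM)
  have hP : Module.rank R P < ℵ₀ := le_add_self.trans_lt (hsum ▸ hM)
  rw [finrank, finrank, finrank, ← toNat_add hQ hP, hsum]

theorem LinearMap.index_eq_finrank_sub_of_rank_lt_aleph0 (f : M →ₗ[R] N)
    (hM : Module.rank R M < ℵ₀) (hN : Module.rank R N < ℵ₀) :
    f.index = finrank R M - finrank R N := by
  have hker := (LinearMap.ker f).finrank_quotient_add_finrank_of_rank_lt_aleph0 hM
  have hcoker := (LinearMap.range f).finrank_quotient_add_finrank_of_rank_lt_aleph0 hN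
  rw [f.quotKerEquivRange.finrank_eq] at hker
  rw [index_eq_finrank_sub]
  lia

theorem rank_eq_of_exact_of_smul_eq_zero {T : Type*} [AddCommGroup T] [Module R T]
    {t : T →ₗ[R] M} {p : M →ₗ[R] N} (hex : Function.Exact t p) (hp : Function.Surjective p)
    {a : R} (ha : a ≠ 0) (hT : ∀ x : T, a • x = 0) :
    Module.rank R M = Module.rank R N := by
  have hker : Module.rank R (LinearMap.ker p) = 0 := by
    refine rank_eq_zero_iff.mpr fun ⟨x, hx⟩ ↦ ?_
    obtain ⟨y, rfl⟩ := (hex x).mp hx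
    exact ⟨a, ha, Subtype.ext <| by simp [← map_smul, hT]⟩
  rw [LinearMap.rank_eq_of_surjective hp, hker, add_zero]

end RankNullity

theorem descent_rank_comparison_general
    (O : Type) [CommRing O] [IsDomain O] [IsDiscreteValuationRing O]
    (π : O) (hπ : Irreducible π)
    (T₁ M₁ N₁ T₂ M₂ N₂ : Type)
    [AddCommGroup T₁] [Module O T₁] [AddCommGroup M₁] [Module O M₁]
    [AddCommGroup N₁] [Module O N₁] [AddCommGroup T₂] [Module O T₂]
    [AddCommGroup M₂] [Module O M₂] [AddCommGroup N₂] [Module O N₂]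
    (t₁ : T₁ →ₗ[O] M₁) (p₁ : M₁ →ₗ[O] N₁)
    (t₂ : T₂ →ₗ[O] M₂) (p₂ : M₂ →ₗ[O] N₂)
    (φ : M₁ →ₗ[O] M₂) (h'' : N₁ →ₗ[O] N₂)
    (hp₁ : Function.Surjective p₁)
    (hex₁ : Function.Exact t₁ p₁)
    (hp₂ : Function.Surjective p₂)
    (hex₂ : Function.Exact t₂ p₂)
    (r s : ℕ) (hT₁ : ∀ x : T₁, π ^ r • x = 0) (hT₂ : ∀ x : T₂, π ^ s • x = 0)
    [Module.Finite O N₁] [Module.Finite O N₂] :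
    Module.Finite O (LinearMap.ker h'') ∧
    Module.Finite O (N₂ ⧸ LinearMap.range h'') ∧
    (Module.finrank O (LinearMap.ker φ) : ℤ)
        - Module.finrank O (M₂ ⧸ LinearMap.range φ)
      = (Module.finrank O (LinearMap.ker h'') : ℤ)
        - Module.finrank O (N₂ ⧸ LinearMap.range h'') ∧
    (Module.finrank O (LinearMap.ker h'') : ℤ)
        - Module.finrank O (N₂ ⧸ LinearMap.range h'')
      = (Module.finrank O N₁ : ℤ) - Module.finrank O N₂ := by
  have e₁ := rank_eq_of_exact_of_smul_eq_zero hex₁ hp₁ (pow_ne_zero r hπ.ne_zero) hT₁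
  have e₂ := rank_eq_of_exact_of_smul_eq_zero hex₂ hp₂ (pow_ne_zero s hπ.ne_zero) hT₂
  have hN₁ := Module.rank_lt_aleph0 O N₁
  have hN₂ := Module.rank_lt_aleph0 O N₂
  have hφ := φ.index_eq_finrank_sub_of_rank_lt_aleph0 (e₁ ▸ hN₁) (e₂ ▸ hN₂)
  have hh'' := h''.index_eq_finrank_sub_of_rank_lt_aleph0 hN₁ hN₂
  rw [finrank, finrank, e₁, e₂] at hφ
  exact ⟨inferInstance, inferInstance, hφ.trans hh''.symm, hh''⟩

/-- Let `O` be a complete discrete valuation ring with uniformizer `π` and finite residue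
field.  Let `0 → T₁ → M₁ → N₁ → 0` and `0 → T₂ → M₂ → N₂ → 0` be exact sequences of
`O`-modules with compatible vertical maps `h' : T₁ → T₂`, `φ : M₁ → M₂`, `h'' : N₁ → N₂`,
where `T₁, T₂` are annihilated by powers of `π`, `N₁` and `N₂` are finitely generated
`O`-modules, and `ker φ`, `coker φ` are finitely generated over `O`.  Then `ker h''` and
`coker h''` are finitely generated over `O` and
`rank_O(ker φ) − rank_O(coker φ) = rank_O(ker h'') − rank_O(coker h'')
  = rank_O(N₁) − rank_O(N₂)`. -/
theorem descent_rank_comparison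
    (O : Type) [CommRing O] [IsDomain O] [IsDiscreteValuationRing O]
    [Finite (IsLocalRing.ResidueField O)]
    (π : O) (hπ : Irreducible π)
    (T₁ M₁ N₁ T₂ M₂ N₂ : Type)
    [AddCommGroup T₁] [Module O T₁] [AddCommGroup M₁] [Module O M₁]
    [AddCommGroup N₁] [Module O N₁] [AddCommGroup T₂] [Module O T₂]
    [AddCommGroup M₂] [Module O M₂] [AddCommGroup N₂] [Module O N₂]
    (t₁ : T₁ →ₗ[O] M₁) (p₁ : M₁ →ₗ[O] N₁)
    (t₂ : T₂ →ₗ[O] M₂) (p₂ : M₂ →ₗ[O] N₂)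
    (h' : T₁ →ₗ[O] T₂) (φ : M₁ →ₗ[O] M₂) (h'' : N₁ →ₗ[O] N₂)
    (ht₁ : Function.Injective t₁) (hp₁ : Function.Surjective p₁)
    (hex₁ : Function.Exact t₁ p₁)
    (ht₂ : Function.Injective t₂) (hp₂ : Function.Surjective p₂)
    (hex₂ : Function.Exact t₂ p₂)
    (hsq₁ : φ.comp t₁ = t₂.comp h') (hsq₂ : h''.comp p₁ = p₂.comp φ)
    (r s : ℕ) (hT₁ : ∀ x : T₁, π ^ r • x = 0) (hT₂ : ∀ x : T₂, π ^ s • x = 0)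
    [Module.Finite O N₁] [Module.Finite O N₂]
    (hkφ : Module.Finite O (LinearMap.ker φ))
    (hcφ : Module.Finite O (M₂ ⧸ LinearMap.range φ)) :
    Module.Finite O (LinearMap.ker h'') ∧
    Module.Finite O (N₂ ⧸ LinearMap.range h'') ∧
    (Module.finrank O (LinearMap.ker φ) : ℤ)
        - Module.finrank O (M₂ ⧸ LinearMap.range φ)
      = (Module.finrank O (LinearMap.ker h'') : ℤ)
        - Module.finrank O (N₂ ⧸ LinearMap.range h'') ∧
    (Module.finrank O (LinearMap.ker h'') : ℤ)
        - Module.finrank O (N₂ ⧸ LinearMap.range h'')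
      = (Module.finrank O N₁ : ℤ) - Module.finrank O N₂ :=
  descent_rank_comparison_general O π hπ T₁ M₁ N₁ T₂ M₂ N₂ t₁ p₁ t₂ p₂ φ h'' hp₁ hex₁ hp₂ hex₂ r s
    hT₁ hT₂
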